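/- (Triangle inequality for the Jensen–Shannon distance) For any probability measures P, Q, R on a measurable space, √JSD(P, R) ≤ √JSD(P, Q) + √JSD(Q, R); that is, the square root of the Jensen–Shannon divergence satisfies the triangle inequality. -/

import Mathlib

open MeasureTheory
open scoped ENNReal

open Classical in
/-- Kullback–Leibler divergence, valued in the extended reals:
`KL(P‖Q) = ∫ log (dP/dQ) dP` if `P ≪ Q` and the log-likelihood ratio is
`P`-integrable, and `∞` otherwise. -/
noncomputable def klDiv {Ω : Type*} [MeasurableSpace Ω] (P Q : Measure Ω) : EReal :=
  if P ≪ Q ∧ Integrable (llr P Q) P then ((∫ x, llr P Q x ∂P : ℝ) : EReal) else ⊤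

/-- Jensen–Shannon divergence:
`JSD(P,Q) = (1/2) KL(P‖M) + (1/2) KL(Q‖M)` with `M = (1/2)(P + Q)`. -/
noncomputable def jsDiv {Ω : Type*} [MeasurableSpace Ω] (P Q : Measure Ω) : EReal :=
  (1 / 2 : EReal) * klDiv P ((2 : ℝ≥0∞)⁻¹ • (P + Q))
    + (1 / 2 : EReal) * klDiv Q ((2 : ℝ≥0∞)⁻¹ • (P + Q))

/-!
Fix a measure `μ` dominating `P`, `Q`, `R`. In terms of densities, `JSD(P, Q) = ∫ jsFun p q dμ`
with `jsFun a b = (a log (a / m) + b log (b / m)) / 2`, `m = (a + b) / 2`. For `a, b ≥ 0` this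
function is itself an integral, `jsFun a b = ∫₀^∞ (s / 2) k(a + s, b + s) ds` with
`k x y = (x - y)² / (x y (x + y))`, and `√k` satisfies the triangle inequality on `(0, ∞)`
by explicit polynomial inequalities. Minkowski's inequality in `L²`, in the form
"`√f ≤ √g + √h` pointwise implies `√∫f ≤ √∫g + √∫h`", passes the triangle inequality first
through the integral in `s`, then through the integral in `x`.
-/

open Real Filter Set Topology

lemma Real.sqrt_le_sqrt_add_sqrt_iff {a b c : ℝ} (ha : 0 ≤ a) (hb : 0 ≤ b) :
    √c ≤ √a + √b ↔ c ≤ a + b + 2 * (√a * √b) := by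
  rw [sqrt_le_left (by positivity), add_sq, sq_sqrt ha, sq_sqrt hb, mul_assoc]
  ring_nf

lemma Real.sqrt_le_sqrt_add_sqrt_of_sq_le {a b c : ℝ} (ha : 0 ≤ a) (hb : 0 ≤ b)
    (h : (c - a - b) ^ 2 ≤ 4 * a * b) : √c ≤ √a + √b := by
  rw [sqrt_le_sqrt_add_sqrt_iff ha hb]
  have hsq : (c - a - b) ^ 2 ≤ (2 * (√a * √b)) ^ 2 := by
    rw [mul_pow, mul_pow, sq_sqrt ha, sq_sqrt hb]; linarith
  linarith [(abs_le_of_sq_le_sq' hsq (by positivity)).2]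

section Minkowski

variable {α : Type*} [MeasurableSpace α] {μ : Measure α}

lemma memLp_two_sqrt {f : α → ℝ} (hf : Integrable f μ) (hf0 : 0 ≤ᵐ[μ] f) :
    MemLp (fun x => √(f x)) 2 μ := by
  refine (memLp_two_iff_integrable_sq (continuous_sqrt.comp_aestronglyMeasurable hf.1)).2 ?_
  refine hf.congr ?_
  filter_upwards [hf0] with x hx
  exact (sq_sqrt hx).symm

lemma integral_sqrt_mul_sqrt_le {f g : α → ℝ} (hf : Integrable f μ) (hg : Integrable g μ)
    (hf0 : 0 ≤ᵐ[μ] f) (hg0 : 0 ≤ᵐ[μ] g) :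
    ∫ x, √(f x) * √(g x) ∂μ ≤ √(∫ x, f x ∂μ) * √(∫ x, g x ∂μ) := by
  have h := integral_mul_le_Lp_mul_Lq_of_nonneg Real.HolderConjugate.two_two
    (ae_of_all _ fun x => sqrt_nonneg (f x)) (ae_of_all _ fun x => sqrt_nonneg (g x))
    (by simpa using memLp_two_sqrt hf hf0) (by simpa using memLp_two_sqrt hg hg0)
  have hsq : ∀ {h : α → ℝ}, 0 ≤ᵐ[μ] h → ∫ x, √(h x) ^ (2 : ℝ) ∂μ = ∫ x, h x ∂μ := fun h0 =>
    integral_congr_ae (h0.mono fun x hx => by dsimp only; rw [rpow_two, sq_sqrt hx])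
  rwa [hsq hf0, hsq hg0, ← sqrt_eq_rpow, ← sqrt_eq_rpow] at h

lemma sqrt_integral_le_sqrt_integral_add_sqrt_integral {f g h : α → ℝ} (hf : Integrable f μ)
    (hg : Integrable g μ) (hh : Integrable h μ) (hg0 : 0 ≤ᵐ[μ] g) (hh0 : 0 ≤ᵐ[μ] h)
    (hfgh : ∀ᵐ x ∂μ, √(f x) ≤ √(g x) + √(h x)) :
    √(∫ x, f x ∂μ) ≤ √(∫ x, g x ∂μ) + √(∫ x, h x ∂μ) := by
  have hgh : Integrable (fun x => g x + h x) μ := hg.add hh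
  have hcross : Integrable (fun x => √(g x) * √(h x)) μ :=
    (memLp_two_sqrt hg hg0).integrable_mul (memLp_two_sqrt hh hh0)
  have hpt : f ≤ᵐ[μ] fun x => g x + h x + 2 * (√(g x) * √(h x)) := by
    filter_upwards [hfgh, hg0, hh0] with x hx hgx hhx
    exact (sqrt_le_sqrt_add_sqrt_iff hgx hhx).1 hx
  refine (sqrt_le_sqrt_add_sqrt_iff (integral_nonneg_of_ae hg0) (integral_nonneg_of_ae hh0)).2 ?_
  calc ∫ x, f x ∂μ ≤ ∫ x, g x + h x + 2 * (√(g x) * √(h x)) ∂μ :=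
        integral_mono_ae hf (hgh.add (hcross.const_mul 2)) hpt
    _ = ∫ x, g x ∂μ + ∫ x, h x ∂μ + 2 * ∫ x, √(g x) * √(h x) ∂μ := by
        rw [integral_add hgh (hcross.const_mul 2), integral_add hg hh, integral_const_mul]
    _ ≤ _ := by gcongr; exact integral_sqrt_mul_sqrt_le hg hh hg0 hh0

end Minkowski

noncomputable def jsKernel (x y : ℝ) : ℝ := (x - y) ^ 2 / (x * y * (x + y))

lemma jsKernel_comm (x y : ℝ) : jsKernel x y = jsKernel y x := by
  unfold jsKernel; ring

lemma jsKernel_nonneg {x y : ℝ} (hx : 0 ≤ x) (hy : 0 ≤ y) : 0 ≤ jsKernel x y := by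
  unfold jsKernel; positivity

-- With `y = x + u`, `z = x + u + v` (`u, v ≥ 0`), each of the next three inequalities clears
-- denominators to a polynomial identity whose remainder has nonnegative coefficients.
lemma jsKernel_le_jsKernel_right {x y z : ℝ} (hx : 0 < x) (hxy : x ≤ y) (hyz : y ≤ z) :
    jsKernel x y ≤ jsKernel x z := by
  obtain ⟨u, hu, rfl⟩ : ∃ u ≥ 0, y = x + u := ⟨y - x, by linarith, by ring⟩
  obtain ⟨v, hv, rfl⟩ : ∃ v ≥ 0, z = x + u + v := ⟨z - (x + u), by linarith, by ring⟩
  unfold jsKernel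
  rw [div_le_div_iff₀ (by positivity) (by positivity)]
  rw [← sub_nonneg]
  have key : (x - (x + u + v)) ^ 2 * (x * (x + u) * (x + (x + u)))
      - (x - (x + u)) ^ 2 * (x * (x + u + v) * (x + (x + u + v)))
      = x * (3 * x * u * v ^ 2 + 3 * x * u ^ 2 * v + 2 * x ^ 2 * v ^ 2 + 4 * x ^ 2 * u * v) := by
    ring
  rw [key]
  positivity

lemma jsKernel_le_jsKernel_left {x y z : ℝ} (hx : 0 < x) (hxy : x ≤ y) (hyz : y ≤ z) :
    jsKernel y z ≤ jsKernel x z := by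
  obtain ⟨u, hu, rfl⟩ : ∃ u ≥ 0, y = x + u := ⟨y - x, by linarith, by ring⟩
  obtain ⟨v, hv, rfl⟩ : ∃ v ≥ 0, z = x + u + v := ⟨z - (x + u), by linarith, by ring⟩
  unfold jsKernel
  rw [div_le_div_iff₀ (by positivity) (by positivity)]
  rw [← sub_nonneg]
  have key : (x - (x + u + v)) ^ 2 * ((x + u) * (x + u + v) * (x + u + (x + u + v)))
      - (x + u - (x + u + v)) ^ 2 * (x * (x + u + v) * (x + (x + u + v)))
      = (x + u + v) * ((u ^ 2 + 2 * u * v) * (x + u) * (2 * x + 2 * u + v)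
        + u * v ^ 2 * (2 * x + 2 * u + v) + u * v ^ 2 * x) := by
    ring
  rw [key]
  positivity

lemma sq_jsKernel_sub_sub_le {x y z : ℝ} (hx : 0 < x) (hxy : x ≤ y) (hyz : y ≤ z) :
    (jsKernel x z - jsKernel x y - jsKernel y z) ^ 2 ≤ 4 * jsKernel x y * jsKernel y z := by
  obtain ⟨u, hu, rfl⟩ : ∃ u ≥ 0, y = x + u := ⟨y - x, by linarith, by ring⟩
  obtain ⟨v, hv, rfl⟩ : ∃ v ≥ 0, z = x + u + v := ⟨z - (x + u), by linarith, by ring⟩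
  have hdiff : jsKernel x (x + u + v) - jsKernel x (x + u) - jsKernel (x + u) (x + u + v)
      = 2 * x * u * v * (4 * x ^ 2 + 7 * x * u + 5 * x * v + 3 * u ^ 2 + 4 * u * v + v ^ 2)
        / ((x + u) * (x * (x + u + v) * (2 * x + u) * (2 * x + 2 * u + v)) * (2 * x + u + v)) := by
    unfold jsKernel; field_simp; ring
  have hprod : 4 * jsKernel x (x + u) * jsKernel (x + u) (x + u + v)
      = 4 * u ^ 2 * v ^ 2
        / ((x + u) ^ 2 * (x * (x + u + v) * (2 * x + u) * (2 * x + 2 * u + v))) := by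
    unfold jsKernel; field_simp; ring
  rw [hdiff, hprod, div_pow, div_le_div_iff₀ (by positivity) (by positivity)]
  generalize hP : 4 * x ^ 2 + 7 * x * u + 5 * x * v + 3 * u ^ 2 + 4 * u * v + v ^ 2 = P
  generalize hW : x * (x + u + v) * (2 * x + u) * (2 * x + 2 * u + v) = W
  have key : W * (2 * x + u + v) ^ 2 - x ^ 2 * P ^ 2 = x * (u * v ^ 4 + 5 * u ^ 2 * v ^ 3
      + 9 * u ^ 3 * v ^ 2 + 7 * u ^ 4 * v + 2 * u ^ 5 + x * v ^ 4 + 9 * x * u * v ^ 3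
      + 22 * x * u ^ 2 * v ^ 2 + 21 * x * u ^ 3 * v + 7 * x * u ^ 4 + 4 * x ^ 2 * v ^ 3
      + 16 * x ^ 2 * u * v ^ 2 + 20 * x ^ 2 * u ^ 2 * v + 8 * x ^ 2 * u ^ 3 + 3 * x ^ 3 * v ^ 2
      + 6 * x ^ 3 * u * v + 3 * x ^ 3 * u ^ 2) := by
    subst hP hW; ring
  have hW0 : 0 ≤ W := hW ▸ by positivity
  nlinarith [mul_nonneg (by positivity : 0 ≤ 4 * u ^ 2 * v ^ 2 * (x + u) ^ 2 * W)
    (by rw [key]; positivity : 0 ≤ W * (2 * x + u + v) ^ 2 - x ^ 2 * P ^ 2)]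

lemma sqrt_jsKernel_triangle_of_le {x y z : ℝ} (hx : 0 < x) (hy : 0 < y) (hxz : x ≤ z) :
    √(jsKernel x z) ≤ √(jsKernel x y) + √(jsKernel y z) := by
  have hz : 0 < z := hx.trans_le hxz
  rcases le_total y x with hyx | hxy
  · calc √(jsKernel x z) ≤ √(jsKernel y z) :=
          sqrt_le_sqrt (jsKernel_le_jsKernel_left hy hyx hxz)
      _ ≤ _ := le_add_of_nonneg_left (sqrt_nonneg _)
  rcases le_total z y with hzy | hyz
  · calc √(jsKernel x z) ≤ √(jsKernel x y) :=
          sqrt_le_sqrt (jsKernel_le_jsKernel_right hx hxz hzy)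
      _ ≤ _ := le_add_of_nonneg_right (sqrt_nonneg _)
  exact sqrt_le_sqrt_add_sqrt_of_sq_le (jsKernel_nonneg hx.le hy.le)
    (jsKernel_nonneg hy.le hz.le) (sq_jsKernel_sub_sub_le hx hxy hyz)

lemma sqrt_jsKernel_triangle {x y z : ℝ} (hx : 0 < x) (hy : 0 < y) (hz : 0 < z) :
    √(jsKernel x z) ≤ √(jsKernel x y) + √(jsKernel y z) := by
  rcases le_total x z with hxz | hzx
  · exact sqrt_jsKernel_triangle_of_le hx hy hxz
  · rw [jsKernel_comm x z, jsKernel_comm x y, jsKernel_comm y z, add_comm]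
    exact sqrt_jsKernel_triangle_of_le hz hy hzx


noncomputable def jsFun (a b : ℝ) : ℝ :=
  (a * log (a / ((a + b) / 2)) + b * log (b / ((a + b) / 2))) / 2

noncomputable def jsIntegrand (a b s : ℝ) : ℝ := s / 2 * jsKernel (a + s) (b + s)

-- Each term has the shape `c * log (t + c)` with `c ≥ 0`, continuous at `t = 0` even for `c = 0`.
noncomputable def jsPrimitive (a b t : ℝ) : ℝ :=
  (2 * ((a + b) / 2 * log (t + (a + b) / 2)) - a * log (t + a) - b * log (t + b)) / 2

lemma jsIntegrand_nonneg {a b s : ℝ} (ha : 0 ≤ a) (hb : 0 ≤ b) (hs : 0 < s) :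
    0 ≤ jsIntegrand a b s :=
  mul_nonneg (by positivity) (jsKernel_nonneg (by positivity) (by positivity))

lemma sqrt_jsIntegrand_triangle {a b c s : ℝ} (ha : 0 ≤ a) (hb : 0 ≤ b) (hc : 0 ≤ c)
    (hs : 0 < s) : √(jsIntegrand a c s) ≤ √(jsIntegrand a b s) + √(jsIntegrand b c s) := by
  have hs2 : 0 ≤ s / 2 := by positivity
  rw [jsIntegrand, jsIntegrand, jsIntegrand, sqrt_mul hs2, sqrt_mul hs2, sqrt_mul hs2, ← mul_add]
  exact mul_le_mul_of_nonneg_left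
    (sqrt_jsKernel_triangle (by positivity) (by positivity) (by positivity)) (sqrt_nonneg _)

lemma continuousWithinAt_mul_log_add {c : ℝ} (hc : 0 ≤ c) :
    ContinuousWithinAt (fun t => c * log (t + c)) (Ici 0) 0 := by
  rcases hc.eq_or_lt with rfl | hc
  · simpa using continuousWithinAt_const
  · exact (continuousAt_const.mul ((continuous_id.add continuous_const).continuousAt.log
      (by simpa using hc.ne'))).continuousWithinAt

lemma hasDerivAt_mul_log_add {c t : ℝ} (hc : 0 ≤ c) (ht : 0 < t) :
    HasDerivAt (fun t => c * log (t + c)) (c / (t + c)) t := by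
  simpa [div_eq_mul_inv] using (((hasDerivAt_id t).add_const c).log (by positivity)).const_mul c

lemma continuousWithinAt_jsPrimitive {a b : ℝ} (ha : 0 ≤ a) (hb : 0 ≤ b) :
    ContinuousWithinAt (jsPrimitive a b) (Ici 0) 0 :=
  ((((continuousWithinAt_mul_log_add (by positivity)).const_mul 2).sub
    (continuousWithinAt_mul_log_add ha)).sub (continuousWithinAt_mul_log_add hb)).div_const 2

lemma hasDerivAt_jsPrimitive {a b t : ℝ} (ha : 0 ≤ a) (hb : 0 ≤ b) (ht : 0 < t) :
    HasDerivAt (jsPrimitive a b) (jsIntegrand a b t) t := by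
  refine ((((hasDerivAt_mul_log_add (by positivity) ht).const_mul 2).sub
    (hasDerivAt_mul_log_add ha ht)).sub (hasDerivAt_mul_log_add hb ht)).div_const 2
    |>.congr_deriv ?_
  have : 0 < t + a := by positivity
  have : 0 < t + b := by positivity
  rw [jsIntegrand, jsKernel]
  field_simp
  ring

lemma tendsto_jsPrimitive_atTop (a b : ℝ) : Tendsto (jsPrimitive a b) atTop (𝓝 0) := by
  have hlog (c : ℝ) : Tendsto (fun t => log (t + (a + b) / 2) - log (t + c)) atTop (𝓝 0) := by
    simpa only [sub_sub_sub_cancel_right, sub_self] using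
      (tendsto_log_comp_add_sub_log ((a + b) / 2)).sub (tendsto_log_comp_add_sub_log c)
  have h := (((hlog a).const_mul a).add ((hlog b).const_mul b)).div_const 2
  simp only [mul_zero, add_zero, zero_div] at h
  exact h.congr fun t => by unfold jsPrimitive; ring

lemma mul_log_div_eq_of_le {c m : ℝ} (hc : 0 ≤ c) (hcm : c ≤ 2 * m) :
    c * log (c / m) = c * log c - c * log m := by
  rcases hc.eq_or_lt with rfl | hc
  · simp
  · rw [log_div hc.ne' (by linarith), mul_sub]

lemma jsPrimitive_zero {a b : ℝ} (ha : 0 ≤ a) (hb : 0 ≤ b) :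
    jsPrimitive a b 0 = -jsFun a b := by
  rw [jsPrimitive, jsFun, mul_log_div_eq_of_le ha (by linarith),
    mul_log_div_eq_of_le hb (by linarith)]
  simp only [zero_add]
  ring

lemma integrableOn_jsIntegrand {a b : ℝ} (ha : 0 ≤ a) (hb : 0 ≤ b) :
    IntegrableOn (jsIntegrand a b) (Ioi 0) :=
  integrableOn_Ioi_deriv_of_nonneg (continuousWithinAt_jsPrimitive ha hb)
    (fun _ hs => hasDerivAt_jsPrimitive ha hb hs) (fun _ hs => jsIntegrand_nonneg ha hb hs)
    (tendsto_jsPrimitive_atTop a b)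

lemma integral_jsIntegrand {a b : ℝ} (ha : 0 ≤ a) (hb : 0 ≤ b) :
    ∫ s in Ioi 0, jsIntegrand a b s = jsFun a b := by
  rw [integral_Ioi_of_hasDerivAt_of_nonneg (continuousWithinAt_jsPrimitive ha hb)
    (fun _ hs => hasDerivAt_jsPrimitive ha hb hs) (fun _ hs => jsIntegrand_nonneg ha hb hs)
    (tendsto_jsPrimitive_atTop a b), jsPrimitive_zero ha hb, zero_sub, neg_neg]

lemma jsFun_nonneg {a b : ℝ} (ha : 0 ≤ a) (hb : 0 ≤ b) : 0 ≤ jsFun a b := by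
  rw [← integral_jsIntegrand ha hb]
  exact setIntegral_nonneg measurableSet_Ioi fun _ hs => jsIntegrand_nonneg ha hb hs

lemma sqrt_jsFun_triangle {a b c : ℝ} (ha : 0 ≤ a) (hb : 0 ≤ b) (hc : 0 ≤ c) :
    √(jsFun a c) ≤ √(jsFun a b) + √(jsFun b c) := by
  rw [← integral_jsIntegrand ha hc, ← integral_jsIntegrand ha hb, ← integral_jsIntegrand hb hc]
  exact sqrt_integral_le_sqrt_integral_add_sqrt_integral (integrableOn_jsIntegrand ha hc)
    (integrableOn_jsIntegrand ha hb) (integrableOn_jsIntegrand hb hc)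
    (ae_restrict_of_forall_mem measurableSet_Ioi fun _ hs => jsIntegrand_nonneg ha hb hs)
    (ae_restrict_of_forall_mem measurableSet_Ioi fun _ hs => jsIntegrand_nonneg hb hc hs)
    (ae_restrict_of_forall_mem measurableSet_Ioi fun _ hs => sqrt_jsIntegrand_triangle ha hb hc hs)

lemma abs_mul_log_div_le {c m : ℝ} (hc : 0 ≤ c) (hcm : c ≤ 2 * m) :
    |c * log (c / m)| ≤ 2 * m := by
  rcases hc.eq_or_lt with rfl | hc
  · simpa using hcm
  have hm : 0 < m := by linarith
  have hlower : 1 - (c / m)⁻¹ ≤ log (c / m) := one_sub_inv_le_log_of_pos (by positivity)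
  have hupper : log (c / m) ≤ c / m - 1 := log_le_sub_one_of_pos (by positivity)
  rw [inv_div] at hlower
  refine abs_le.2 ⟨?_, ?_⟩
  · calc -(2 * m) ≤ c * (1 - m / c) := by field_simp; linarith
      _ ≤ c * log (c / m) := by gcongr
  · have hle : c / m - 1 ≤ 1 := by rw [sub_le_iff_le_add, div_le_iff₀ hm]; linarith
    calc c * log (c / m) ≤ c * 1 := by gcongr; linarith
      _ ≤ 2 * m := by linarith

section Densities

variable {Ω : Type*} [MeasurableSpace Ω] {μ : Measure Ω}

lemma integrable_mul_log_div {f n : Ω → ℝ} (hf : AEMeasurable f μ) (hn : Integrable n μ)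
    (hf0 : 0 ≤ᵐ[μ] f) (hfn : ∀ᵐ x ∂μ, f x ≤ 2 * n x) :
    Integrable (fun x => f x * log (f x / n x)) μ := by
  refine (hn.const_mul 2).mono'
    (hf.mul (measurable_log.comp_aemeasurable (hf.div hn.aemeasurable))).aestronglyMeasurable ?_
  filter_upwards [hf0, hfn] with x hx hxn
  exact abs_mul_log_div_le hx hxn

lemma klDiv_eq_integral_rnDeriv {P N : Measure Ω} [IsFiniteMeasure P] [SigmaFinite N]
    [SigmaFinite μ] (hPN : P ≪ N) (hNμ : N ≪ μ) {n : Ω → ℝ}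
    (hn : ∀ᵐ x ∂μ, (N.rnDeriv μ x).toReal = n x)
    (hint : Integrable (fun x => (P.rnDeriv μ x).toReal
      * log ((P.rnDeriv μ x).toReal / n x)) μ) :
    klDiv P N
      = ((∫ x, (P.rnDeriv μ x).toReal * log ((P.rnDeriv μ x).toReal / n x) ∂μ : ℝ) : EReal) := by
  have hPμ : P ≪ μ := hPN.trans hNμ
  have hllr : llr P N =ᵐ[P] fun x => log ((P.rnDeriv μ x).toReal / n x) := by
    filter_upwards [hPN (Measure.rnDeriv_eq_div hPμ hNμ), hPμ hn] with x hx hnx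
    simp only [llr_def, hx, ENNReal.toReal_div, hnx]
  have hint' : Integrable (llr P N) P :=
    ((integrable_rnDeriv_smul_iff hPμ).1 hint).congr hllr.symm
  rw [klDiv, if_pos ⟨hPN, hint'⟩, integral_congr_ae hllr, ← integral_rnDeriv_smul hPμ]
  rfl

lemma toReal_rnDeriv_half_add (P Q : Measure Ω) [IsFiniteMeasure P] [IsFiniteMeasure Q]
    [SigmaFinite μ] :
    ∀ᵐ x ∂μ, (((2 : ℝ≥0∞)⁻¹ • (P + Q)).rnDeriv μ x).toReal
      = ((P.rnDeriv μ x).toReal + (Q.rnDeriv μ x).toReal) / 2 := by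
  filter_upwards [Measure.rnDeriv_smul_left_of_ne_top (P + Q) μ (by simp : (2 : ℝ≥0∞)⁻¹ ≠ ⊤),
    Measure.rnDeriv_add P Q μ, Measure.rnDeriv_ne_top P μ, Measure.rnDeriv_ne_top Q μ]
    with x hsmul hadd hP hQ
  rw [hsmul, Pi.smul_apply, hadd, Pi.add_apply, smul_eq_mul, ENNReal.toReal_mul,
    ENNReal.toReal_add hP hQ]
  simp [div_eq_inv_mul]

lemma integrable_mul_log_div_midpoint_rnDeriv (P Q μ : Measure Ω) [IsFiniteMeasure P]
    [IsFiniteMeasure Q] :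
    Integrable (fun x => (P.rnDeriv μ x).toReal * log ((P.rnDeriv μ x).toReal
      / (((P.rnDeriv μ x).toReal + (Q.rnDeriv μ x).toReal) / 2))) μ ∧
    Integrable (fun x => (Q.rnDeriv μ x).toReal * log ((Q.rnDeriv μ x).toReal
      / (((P.rnDeriv μ x).toReal + (Q.rnDeriv μ x).toReal) / 2))) μ := by
  have hn := (Measure.integrable_toReal_rnDeriv (μ := P) (ν := μ)).add
    (Measure.integrable_toReal_rnDeriv (μ := Q) (ν := μ)) |>.div_const 2
  exact ⟨integrable_mul_log_div (Measure.measurable_rnDeriv P μ).ennreal_toReal.aemeasurable hn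
      (ae_of_all _ fun _ => ENNReal.toReal_nonneg)
      (ae_of_all _ fun x => by linarith [ENNReal.toReal_nonneg (a := Q.rnDeriv μ x)]),
    integrable_mul_log_div (Measure.measurable_rnDeriv Q μ).ennreal_toReal.aemeasurable hn
      (ae_of_all _ fun _ => ENNReal.toReal_nonneg)
      (ae_of_all _ fun x => by linarith [ENNReal.toReal_nonneg (a := P.rnDeriv μ x)])⟩

lemma integrable_jsFun_rnDeriv (P Q μ : Measure Ω) [IsFiniteMeasure P] [IsFiniteMeasure Q] :
    Integrable (fun x => jsFun (P.rnDeriv μ x).toReal (Q.rnDeriv μ x).toReal) μ :=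
  let h := integrable_mul_log_div_midpoint_rnDeriv P Q μ
  (h.1.add h.2).div_const 2

lemma toReal_jsDiv_eq_integral {P Q μ : Measure Ω} [IsFiniteMeasure P] [IsFiniteMeasure Q]
    [SigmaFinite μ] (hPμ : P ≪ μ) (hQμ : Q ≪ μ) :
    (jsDiv P Q).toReal = ∫ x, jsFun (P.rnDeriv μ x).toReal (Q.rnDeriv μ x).toReal ∂μ := by
  obtain ⟨hintP, hintQ⟩ := integrable_mul_log_div_midpoint_rnDeriv P Q μ
  have := (P + Q).smul_finite (by simp : (2 : ℝ≥0∞)⁻¹ ≠ ∞)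
  have hM : (2 : ℝ≥0∞)⁻¹ • (P + Q) ≪ μ :=
    Measure.smul_absolutelyContinuous.trans (hPμ.add_left hQμ)
  have hPM : P ≪ (2 : ℝ≥0∞)⁻¹ • (P + Q) := (Measure.AbsolutelyContinuous.rfl.add_right Q).trans
    (Measure.absolutelyContinuous_smul (by simp))
  have hQM : Q ≪ (2 : ℝ≥0∞)⁻¹ • (P + Q) := (Measure.AbsolutelyContinuous.rfl.add_right' P).trans
    (Measure.absolutelyContinuous_smul (by simp))
  rw [jsDiv, klDiv_eq_integral_rnDeriv hPM hM (toReal_rnDeriv_half_add P Q) hintP,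
    klDiv_eq_integral_rnDeriv hQM hM (toReal_rnDeriv_half_add P Q) hintQ,
    show (1 / 2 : EReal) = ((1 / 2 : ℝ) : EReal) by norm_cast, ← EReal.coe_mul, ← EReal.coe_mul,
    ← EReal.coe_add, EReal.toReal_coe]
  simp only [jsFun]
  rw [integral_div, integral_add hintP hintQ]
  ring

end Densities

theorem sqrt_jsDiv_triangle {Ω : Type*} [MeasurableSpace Ω]
    (P Q R : Measure Ω) [IsProbabilityMeasure P] [IsProbabilityMeasure Q]
    [IsProbabilityMeasure R] :
    Real.sqrt (jsDiv P R).toReal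
      ≤ Real.sqrt (jsDiv P Q).toReal + Real.sqrt (jsDiv Q R).toReal := by
  set μ := P + Q + R
  have hPμ : P ≪ μ := (Measure.AbsolutelyContinuous.rfl.add_right Q).add_right R
  have hQμ : Q ≪ μ := (Measure.AbsolutelyContinuous.rfl.add_right' P).add_right R
  have hRμ : R ≪ μ := Measure.AbsolutelyContinuous.rfl.add_right' (P + Q)
  rw [toReal_jsDiv_eq_integral hPμ hRμ, toReal_jsDiv_eq_integral hPμ hQμ,
    toReal_jsDiv_eq_integral hQμ hRμ]
  open ENNReal in
  exact sqrt_integral_le_sqrt_integral_add_sqrt_integral (integrable_jsFun_rnDeriv P R μ)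
    (integrable_jsFun_rnDeriv P Q μ) (integrable_jsFun_rnDeriv Q R μ)
    (ae_of_all _ fun _ => jsFun_nonneg toReal_nonneg toReal_nonneg)
    (ae_of_all _ fun _ => jsFun_nonneg toReal_nonneg toReal_nonneg)
    (ae_of_all _ fun _ => sqrt_jsFun_triangle toReal_nonneg toReal_nonneg toReal_nonneg)
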